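/- Non-interference: if U and V are extended programs over disjoint alphabets, then for every extended program P the extended WS-models and the extended RD-models of the dynamic logic program ⟨P, U, V⟩ coincide with those of ⟨P, V, U⟩, i.e. WS'(⟨P, U, V⟩) = WS'(⟨P, V, U⟩) and RD'(⟨P, U, V⟩) = RD'(⟨P, V, U⟩). -/
import Mathlib


namespace RuleUpdates

/-- Objective literal: an atom (a natural number) or its strong negation. -/
inductive OLit where
  | pos : ℕ → OLit
  | neg : ℕ → OLit
deriving DecidableEq

/-- Strong negation on objective literals (with ¬¬p identified with p). -/
def OLit.compl : OLit → OLit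
  | .pos p => .neg p
  | .neg p => .pos p

/-- Literal: an objective literal or its default negation (not not l = l). -/
inductive Lit where
  | obj : OLit → Lit
  | ndef : OLit → Lit
deriving DecidableEq

/-- Extended rule: a head literal and a finite set of body literals. -/
structure Rule where
  head : Lit
  body : Finset Lit

/-- Interpretation: a consistent set of objective literals. -/
def Interp (J : Set OLit) : Prop :=
  ∀ p : ℕ, ¬ (OLit.pos p ∈ J ∧ OLit.neg p ∈ J)

/-- Satisfaction of a literal. -/
def satLit (J : Set OLit) : Lit → Prop
  | .obj l => l ∈ J
  | .ndef l => l ∉ J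

/-- Satisfaction of a set of body literals. -/
def satBody (J : Set OLit) (B : Finset Lit) : Prop :=
  ∀ L ∈ B, satLit J L

/-- Satisfaction of a rule. -/
def satRule (J : Set OLit) (π : Rule) : Prop :=
  satBody J π.body → satLit J π.head

/-- J is a model of a program. -/
def isModel (J : Set OLit) (P : Set Rule) : Prop :=
  ∀ π ∈ P, satRule J π

/-- J* = J ∪ { not l | l ∈ ℒ ∖ J }, as a set of literals. -/
def star (J : Set OLit) : Set Lit :=
  {L | ∃ l : OLit, (L = Lit.obj l ∧ l ∈ J) ∨ (L = Lit.ndef l ∧ l ∉ J)}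

/-- def(J) = { (not l.) | l ∈ ℒ ∖ J }. -/
def defFacts (J : Set OLit) : Set Rule :=
  {π | ∃ l : OLit, l ∉ J ∧ π = ⟨Lit.ndef l, ∅⟩}

/-- S (a set of literals) is closed under program P, all literals
treated as distinct propositional atoms. -/
def closedUnder (P : Set Rule) (S : Set Lit) : Prop :=
  ∀ π ∈ P, (π.body : Set Lit) ⊆ S → π.head ∈ S

/-- least(P): the least model of P when all literals are treated as
distinct propositional atoms. -/
def leastModel (P : Set Rule) : Set Lit :=
  ⋂₀ {S | closedUnder P S}

/-- Stable model of an extended program: J* = least(P ∪ def(J)). -/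
def isStableModel (P : Set Rule) (J : Set OLit) : Prop :=
  Interp J ∧ star J = leastModel (P ∪ defFacts J)

/-- Level of a literal, with ℓ(not l) = ℓ(l). -/
def litLevel (ℓ : OLit → ℕ) : Lit → ℕ
  | .obj l => ℓ l
  | .ndef l => ℓ l

/-- ℓ↑(S): the maximal level of a literal in the finite set S. -/
def supLevel (ℓ : OLit → ℕ) (S : Finset Lit) : ℕ :=
  S.sup (litLevel ℓ)

/-- ℓ↓(S): the minimal level of a literal in the finite set S. -/
noncomputable def infLevel (ℓ : OLit → ℕ) (S : Finset Lit) : ℕ :=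
  sInf (litLevel ℓ '' (S : Set Lit))

/-- Well-supported model of an extended program w.r.t. a level mapping ℓ. -/
def isWSModelWith (P : Set Rule) (J : Set OLit) (ℓ : OLit → ℕ) : Prop :=
  isModel J P ∧
    ∀ l ∈ J, ∃ π ∈ P, π.head = Lit.obj l ∧ satBody J π.body ∧
      supLevel ℓ π.body < ℓ l

/-- Well-supported model of an extended program. -/
def isWSModel (P : Set Rule) (J : Set OLit) : Prop :=
  Interp J ∧ ∃ ℓ : OLit → ℕ, isWSModelWith P J ℓ

/-- con(L): the literals in conflict with L. -/
def con : Lit → Finset Lit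
  | .obj l => {Lit.ndef l, Lit.obj l.compl}
  | .ndef l => {Lit.obj l}

/-- ρ(P): all rules occurring in the components of the DLP. -/
def allRules {n : ℕ} (P : Fin n → Set Rule) : Set Rule :=
  {π | ∃ i : Fin n, π ∈ P i}

/-- The rule π ∈ P i is rejected w.r.t. the set of literals S:
some later σ with conflicting head has its body included in S. -/
def rejIn {n : ℕ} (P : Fin n → Set Rule) (S : Set Lit) (i : Fin n) (π : Rule) : Prop :=
  ∃ j : Fin n, i < j ∧ ∃ σ ∈ P j, σ.head ∈ con π.head ∧ (σ.body : Set Lit) ⊆ S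

/-- rem(P, S) = ρ(P) ∖ rej(P, S), as a set of component-indexed rules. -/
def remSet {n : ℕ} (P : Fin n → Set Rule) (S : Set Lit) : Set (Fin n × Rule) :=
  {x | x.2 ∈ P x.1 ∧ ¬ rejIn P S x.1 x.2}

/-- The operator T_{P,J}. -/
def TOp {n : ℕ} (P : Fin n → Set Rule) (J : Set OLit) (S : Set Lit) : Set Lit :=
  {L | ((∃ x ∈ remSet P (star J), x.2.head = L ∧ (x.2.body : Set Lit) ⊆ S) ∨
        (∃ l : OLit, l ∉ J ∧ L = Lit.ndef l)) ∧
       ¬ ∃ σ ∈ remSet P S, σ.2.head ∈ con L ∧ (σ.2.body : Set Lit) ⊆ star J}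

/-- Iterates of T_{P,J} starting from ∅. -/
def TIter {n : ℕ} (P : Fin n → Set Rule) (J : Set OLit) : ℕ → Set Lit
  | 0 => ∅
  | k + 1 => TOp P J (TIter P J k)

/-- Extended RD-model of a DLP: J* = ⋃_{k≥0} T_{P,J}^k(∅). -/
def isExtRD {n : ℕ} (P : Fin n → Set Rule) (J : Set OLit) : Prop :=
  Interp J ∧ star J = ⋃ k : ℕ, TIter P J k

/-- rej^ℓ(P, J): π ∈ P i is rejected w.r.t. J and the level mapping ℓ. -/
def rejLvl {n : ℕ} (P : Fin n → Set Rule) (J : Set OLit) (ℓ : OLit → ℕ)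
    (i : Fin n) (π : Rule) : Prop :=
  ∃ j : Fin n, i < j ∧ ∃ σ ∈ P j, σ.head ∈ con π.head ∧ satBody J σ.body ∧
    supLevel ℓ σ.body < infLevel ℓ (con π.head)

/-- Extended WS-model of a DLP. -/
def isExtWS {n : ℕ} (P : Fin n → Set Rule) (J : Set OLit) : Prop :=
  Interp J ∧ ∃ ℓ : OLit → ℕ,
    (∀ i : Fin n, ∀ π ∈ P i, ¬ rejLvl P J ℓ i π → satRule J π) ∧
    (∀ l ∈ J, ∃ x ∈ remSet P (star J), x.2.head = Lit.obj l ∧ satBody J x.2.body ∧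
      supLevel ℓ x.2.body < ℓ l)

/-- A program is acyclic w.r.t. a level mapping ℓ. -/
def acyclicWrt (Q : Set Rule) (ℓ : OLit → ℕ) : Prop :=
  (∀ l : OLit, ℓ l = ℓ l.compl) ∧ ∀ π ∈ Q, supLevel ℓ π.body < litLevel ℓ π.head

/-- The atom occurring in an objective literal. -/
def OLit.atom : OLit → ℕ
  | .pos p => p
  | .neg p => p

/-- The atom occurring in a literal. -/
def Lit.atom : Lit → ℕ
  | .obj l => l.atom
  | .ndef l => l.atom

/-- A program is over the alphabet A iff every atom occurring in it belongs to A. -/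
def progOver (P : Set Rule) (A : Set ℕ) : Prop :=
  ∀ π ∈ P, π.head.atom ∈ A ∧ ∀ L ∈ π.body, L.atom ∈ A

section Aux

lemma con_atom {L M : Lit} (h : M ∈ con L) : M.atom = L.atom := by
  cases L with
  | obj l =>
    simp only [con, Finset.mem_insert, Finset.mem_singleton] at h
    rcases h with h | h <;> subst h <;> cases l <;> rfl
  | ndef l =>
    simp only [con, Finset.mem_singleton] at h
    subst h; rfl

variable {P U V : Set Rule} {A₁ A₂ : Set ℕ}

lemma noConf (hd : Disjoint A₁ A₂) (hU : progOver U A₁) (hV : progOver V A₂)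
    {π σ : Rule} (hπ : π ∈ U) (hσ : σ ∈ V) : σ.head ∉ con π.head := by
  intro h
  have h1 := (hU π hπ).1
  have h2 := (hV σ hσ).1
  rw [con_atom h] at h2
  exact Set.disjoint_left.mp hd h1 h2

lemma rejIn_zero_mp {S : Set Lit} {π : Rule}
    (h : rejIn ![P, U, V] S 0 π) : rejIn ![P, V, U] S 0 π := by
  obtain ⟨j, hj, σ, hσ, hc⟩ := h
  fin_cases j
  · exact absurd hj (by decide)
  · exact ⟨2, by decide, σ, hσ, hc⟩
  · exact ⟨1, by decide, σ, hσ, hc⟩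

lemma rejIn_one (hd : Disjoint A₁ A₂) (hU : progOver U A₁) (hV : progOver V A₂)
    {S : Set Lit} {π : Rule} (hπ : π ∈ U) : ¬ rejIn ![P, U, V] S 1 π := by
  rintro ⟨j, hj, σ, hσ, hc, -⟩
  fin_cases j
  · exact absurd hj (by decide)
  · exact absurd hj (by decide)
  · exact noConf hd hU hV hπ hσ hc

lemma rejIn_two {Q : Fin 3 → Set Rule} {S : Set Lit} {π : Rule} :
    ¬ rejIn Q S 2 π := by
  rintro ⟨j, hj, -⟩
  fin_cases j <;> exact absurd hj (by decide)

lemma exists_remSet (hd : Disjoint A₁ A₂) (hU : progOver U A₁) (hV : progOver V A₂)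
    (S : Set Lit) (Φ : Rule → Prop)
    (h : ∃ x ∈ remSet ![P, U, V] S, Φ x.2) : ∃ x ∈ remSet ![P, V, U] S, Φ x.2 := by
  obtain ⟨⟨i, π⟩, ⟨hmem, hnrej⟩, hΦ⟩ := h
  fin_cases i
  · exact ⟨(0, π), ⟨hmem, fun h => hnrej (rejIn_zero_mp h)⟩, hΦ⟩
  · exact ⟨(2, π), ⟨hmem, rejIn_two⟩, hΦ⟩
  · exact ⟨(1, π), ⟨hmem, rejIn_one hd.symm hV hU hmem⟩, hΦ⟩

lemma TOp_sub (hd : Disjoint A₁ A₂) (hU : progOver U A₁) (hV : progOver V A₂)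
    {J : Set OLit} {S : Set Lit} : TOp ![P, U, V] J S ⊆ TOp ![P, V, U] J S := by
  rintro L ⟨hA, hB⟩
  refine ⟨?_, fun h => hB (exists_remSet (P := P) (U := V) (V := U) hd.symm hV hU S
    (fun r => r.head ∈ con L ∧ (r.body : Set Lit) ⊆ star J) h)⟩
  rcases hA with h | h
  · exact Or.inl (exists_remSet (P := P) hd hU hV (star J)
      (fun r => r.head = L ∧ (r.body : Set Lit) ⊆ S) h)
  · exact Or.inr h

lemma TIter_eq (hd : Disjoint A₁ A₂) (hU : progOver U A₁) (hV : progOver V A₂)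
    (J : Set OLit) (k : ℕ) : TIter ![P, U, V] J k = TIter ![P, V, U] J k := by
  induction k with
  | zero => rfl
  | succ k ih =>
    show TOp _ J _ = TOp _ J _
    rw [ih]
    exact subset_antisymm (TOp_sub hd hU hV) (TOp_sub hd.symm hV hU)

lemma rejLvl_zero_mp {J : Set OLit} {ℓ : OLit → ℕ} {π : Rule}
    (h : rejLvl ![P, U, V] J ℓ 0 π) : rejLvl ![P, V, U] J ℓ 0 π := by
  obtain ⟨j, hj, σ, hσ, hc⟩ := h
  fin_cases j
  · exact absurd hj (by decide)
  · exact ⟨2, by decide, σ, hσ, hc⟩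
  · exact ⟨1, by decide, σ, hσ, hc⟩

lemma rejLvl_one (hd : Disjoint A₁ A₂) (hU : progOver U A₁) (hV : progOver V A₂)
    {J : Set OLit} {ℓ : OLit → ℕ} {π : Rule} (hπ : π ∈ U) :
    ¬ rejLvl ![P, U, V] J ℓ 1 π := by
  rintro ⟨j, hj, σ, hσ, hc, -⟩
  fin_cases j
  · exact absurd hj (by decide)
  · exact absurd hj (by decide)
  · exact noConf hd hU hV hπ hσ hc

lemma rejLvl_two {Q : Fin 3 → Set Rule} {J : Set OLit} {ℓ : OLit → ℕ} {π : Rule} :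
    ¬ rejLvl Q J ℓ 2 π := by
  rintro ⟨j, hj, -⟩
  fin_cases j <;> exact absurd hj (by decide)

lemma extWS_mp (hd : Disjoint A₁ A₂) (hU : progOver U A₁) (hV : progOver V A₂)
    {J : Set OLit} (h : isExtWS ![P, U, V] J) : isExtWS ![P, V, U] J := by
  obtain ⟨hI, ℓ, h1, h2⟩ := h
  refine ⟨hI, ℓ, ?_, fun l hl => exists_remSet (P := P) hd hU hV (star J)
    (fun r => r.head = Lit.obj l ∧ satBody J r.body ∧ supLevel ℓ r.body < ℓ l) (h2 l hl)⟩
  intro i π hπ hnrej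
  fin_cases i
  · exact h1 0 π hπ (fun h => hnrej (rejLvl_zero_mp h))
  · exact h1 2 π hπ rejLvl_two
  · exact h1 1 π hπ (rejLvl_one hd hU hV hπ)

lemma extRD_mp (hd : Disjoint A₁ A₂) (hU : progOver U A₁) (hV : progOver V A₂)
    {J : Set OLit} (h : isExtRD ![P, U, V] J) : isExtRD ![P, V, U] J := by
  obtain ⟨hI, heq⟩ := h
  refine ⟨hI, ?_⟩
  rw [heq]
  exact Set.iUnion_congr (fun k => TIter_eq hd hU hV J k)

end Aux

/-- non-interference: updates over disjoint alphabets commute. -/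
theorem non_interference (P U V : Set Rule)
    (hdisj : ∃ A₁ A₂ : Set ℕ, Disjoint A₁ A₂ ∧ progOver U A₁ ∧ progOver V A₂) :
    {J : Set OLit | isExtWS ![P, U, V] J} = {J : Set OLit | isExtWS ![P, V, U] J} ∧
    {J : Set OLit | isExtRD ![P, U, V] J} = {J : Set OLit | isExtRD ![P, V, U] J} := by
  obtain ⟨A₁, A₂, hd, hU, hV⟩ := hdisj
  exact ⟨Set.ext fun J => ⟨extWS_mp hd hU hV, extWS_mp hd.symm hV hU⟩,
         Set.ext fun J => ⟨extRD_mp hd hU hV, extRD_mp hd.symm hV hU⟩⟩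

end RuleUpdates
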